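/- For the non-symmetric binary channel above, the choice p₀ = 1/2 is asymptotically optimal to second order: I(X;Y) evaluated at p₀ = 1/2 equals d²/(8 log 2) + O(d⁴), and for every fixed p₀ ∈ [0,1], I(X;Y) ≤ (p₀ - p₀²)·d²/(2 log 2) + O(d⁴) as d → 0. -/

import Mathlib

/-- Binary entropy function (base-2 logarithms). -/
noncomputable def binEnt (p : ℝ) : ℝ :=
  -(p * Real.logb 2 p) - (1 - p) * Real.logb 2 (1 - p)

/-- Mutual information of the non-symmetric binary channel with rows
`((1+d)/2, (1-d)/2)` and `(1/2, 1/2)`, with input probability `p₀` on `x = 0`. -/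
noncomputable def nonsymInfo (d p₀ : ℝ) : ℝ :=
  binEnt ((1 + p₀ * d) / 2) - p₀ * (binEnt ((1 - d) / 2) - 1) - 1


/-!
Writing `φ(x) = (1 + x) log (1 + x) + (1 - x) log (1 - x)` (`entropyGap`), one has
`H((1 + x)/2) = 1 - φ(x) / (2 log 2)`, and `φ` is even, so
`2 log 2 · I(X;Y) = p₀ φ(d) - φ(p₀ d)`.  The cubic Taylor polynomials of `log (1 ± x)` give
`φ(x) = x² + O(x⁴)`, hence `2 log 2 · I(X;Y) = (p₀ - p₀²) d² + O(d⁴)` uniformly in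
`p₀ ∈ [0, 1]`; at `p₀ = 1/2` the leading coefficient is `1/4`.
-/

open Real

noncomputable def entropyGap (x : ℝ) : ℝ :=
  (1 + x) * log (1 + x) + (1 - x) * log (1 - x)

lemma entropyGap_neg (x : ℝ) : entropyGap (-x) = entropyGap x := by
  unfold entropyGap; ring_nf

lemma abs_log_one_sub_add_cubic_le {x : ℝ} (hx : |x| ≤ 1 / 2) :
    |log (1 - x) + (x + x ^ 2 / 2 + x ^ 3 / 3)| ≤ 2 * x ^ 4 := by
  have htaylor := abs_log_sub_add_sum_range_le (hx.trans_lt (by norm_num)) 3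
  simp only [Finset.sum_range_succ, Finset.sum_range_zero] at htaylor
  norm_num at htaylor
  calc |log (1 - x) + (x + x ^ 2 / 2 + x ^ 3 / 3)|
      = |x + x ^ 2 / 2 + x ^ 3 / 3 + log (1 - x)| := by ring_nf
    _ ≤ |x| ^ 4 / (1 - |x|) := htaylor
    _ ≤ |x| ^ 4 / (1 / 2) := by gcongr; linarith
    _ = 2 * x ^ 4 := by rw [pow_abs, abs_of_nonneg (by positivity)]; ring

lemma abs_entropyGap_sub_sq_le {x : ℝ} (hx : |x| ≤ 1 / 2) :
    |entropyGap x - x ^ 2| ≤ 7 * x ^ 4 := by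
  set errSub := log (1 - x) + (x + x ^ 2 / 2 + x ^ 3 / 3)
  set errAdd := log (1 + x) - (x - x ^ 2 / 2 + x ^ 3 / 3)
  have herrSub : |errSub| ≤ 2 * x ^ 4 := abs_log_one_sub_add_cubic_le hx
  have herrAdd : |errAdd| ≤ 2 * x ^ 4 := by
    have h := abs_log_one_sub_add_cubic_le (x := -x) (by rwa [abs_neg])
    convert h using 2
    · simp only [errAdd]; ring_nf
    · ring
  have hx' := abs_le.mp hx
  have hsplit : entropyGap x - x ^ 2 = (1 + x) * errAdd + (1 - x) * errSub + 2 / 3 * x ^ 4 := by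
    unfold entropyGap; ring
  have hAdd : |(1 + x) * errAdd| ≤ 3 / 2 * (2 * x ^ 4) := by
    rw [abs_mul]; gcongr; exact abs_le.mpr ⟨by linarith, by linarith⟩
  have hSub : |(1 - x) * errSub| ≤ 3 / 2 * (2 * x ^ 4) := by
    rw [abs_mul]; gcongr; exact abs_le.mpr ⟨by linarith, by linarith⟩
  rw [hsplit]
  calc |(1 + x) * errAdd + (1 - x) * errSub + 2 / 3 * x ^ 4|
      ≤ |(1 + x) * errAdd| + |(1 - x) * errSub| + |2 / 3 * x ^ 4| := abs_add_three _ _ _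
    _ ≤ 3 / 2 * (2 * x ^ 4) + 3 / 2 * (2 * x ^ 4) + 2 / 3 * x ^ 4 := by
        rw [abs_of_nonneg (by positivity : (0 : ℝ) ≤ 2 / 3 * x ^ 4)]; linarith
    _ ≤ 7 * x ^ 4 := by linarith [pow_nonneg (sq_nonneg x) 2]

lemma abs_mul_le_abs_of_abs_le_one {a : ℝ} (ha : |a| ≤ 1) (b : ℝ) : |a * b| ≤ |b| := by
  rw [abs_mul]; exact mul_le_of_le_one_left (abs_nonneg b) ha

lemma binEnt_one_add_div_two {x : ℝ} (hx : |x| < 1) :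
    binEnt ((1 + x) / 2) = 1 - entropyGap x / (2 * log 2) := by
  obtain ⟨hx₁, hx₂⟩ := abs_lt.mp hx
  have hlog2 : log 2 ≠ 0 := (log_pos one_lt_two).ne'
  rw [binEnt, show 1 - (1 + x) / 2 = (1 - x) / 2 by ring, logb, logb,
    log_div (by linarith) two_ne_zero, log_div (by linarith) two_ne_zero, entropyGap]
  field_simp
  ring

lemma nonsymInfo_eq_entropyGap {d p₀ : ℝ} (hd : |d| < 1) (hp : |p₀| ≤ 1) :
    nonsymInfo d p₀ = (p₀ * entropyGap d - entropyGap (p₀ * d)) / (2 * log 2) := by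
  have hpd : |p₀ * d| < 1 := (abs_mul_le_abs_of_abs_le_one hp d).trans_lt hd
  have hneg : binEnt ((1 - d) / 2) = 1 - entropyGap d / (2 * log 2) := by
    rw [← entropyGap_neg, ← binEnt_one_add_div_two (by rwa [abs_neg]), sub_eq_add_neg]
  rw [nonsymInfo, binEnt_one_add_div_two hpd, hneg]
  ring

lemma abs_nonsymInfo_sub_le {d p₀ : ℝ} (hd : |d| ≤ 1 / 2) (hp : |p₀| ≤ 1) :
    |nonsymInfo d p₀ - (p₀ - p₀ ^ 2) * d ^ 2 / (2 * log 2)| ≤ 7 / log 2 * d ^ 4 := by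
  have hpd : |p₀ * d| ≤ 1 / 2 := (abs_mul_le_abs_of_abs_le_one hp d).trans hd
  have hgap := abs_entropyGap_sub_sq_le hd
  have hgap' := abs_entropyGap_sub_sq_le hpd
  have hp₄ : (p₀ * d) ^ 4 ≤ d ^ 4 := by
    have h := pow_le_pow_left₀ (abs_nonneg _) (abs_mul_le_abs_of_abs_le_one hp d) 4
    rwa [Even.pow_abs (by decide), Even.pow_abs (by decide)] at h
  have hnum : |p₀ * (entropyGap d - d ^ 2) - (entropyGap (p₀ * d) - (p₀ * d) ^ 2)|
      ≤ 14 * d ^ 4 :=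
    calc _ ≤ |p₀| * |entropyGap d - d ^ 2| + |entropyGap (p₀ * d) - (p₀ * d) ^ 2| := by
          rw [← abs_mul]; exact abs_sub _ _
      _ ≤ 1 * (7 * d ^ 4) + 7 * d ^ 4 := by gcongr; linarith
      _ = 14 * d ^ 4 := by ring
  have hrepr : nonsymInfo d p₀ - (p₀ - p₀ ^ 2) * d ^ 2 / (2 * log 2)
      = (p₀ * (entropyGap d - d ^ 2) - (entropyGap (p₀ * d) - (p₀ * d) ^ 2)) /
          (2 * log 2) := by
    rw [nonsymInfo_eq_entropyGap (by linarith) hp]; ring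
  have h2log2 : 0 < 2 * log 2 := by positivity
  rw [hrepr, abs_div, abs_of_pos h2log2, div_le_iff₀ h2log2]
  calc _ ≤ 14 * d ^ 4 := hnum
    _ = 7 / log 2 * d ^ 4 * (2 * log 2) := by field_simp; ring

/-- `p₀ = 1/2` is asymptotically optimal to second order: at `p₀ = 1/2` the
mutual information is `d²/(8 log 2) + O(d⁴)`, and for every fixed `p₀ ∈ [0,1]`,
`I(X;Y) ≤ (p₀ - p₀²) d²/(2 log 2) + O(d⁴)` as `d → 0`. -/
theorem nonsym_channel_half_optimal :
    (∃ K > (0 : ℝ), ∃ δ > (0 : ℝ), ∀ d : ℝ, |d| ≤ δ →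
      |nonsymInfo d (1 / 2) - d ^ 2 / (8 * Real.log 2)| ≤ K * d ^ 4) ∧
    (∀ p₀ ∈ Set.Icc (0:ℝ) 1, ∃ K > (0 : ℝ), ∃ δ > (0 : ℝ), ∀ d : ℝ, |d| ≤ δ →
      nonsymInfo d p₀ ≤ (p₀ - p₀ ^ 2) * d ^ 2 / (2 * Real.log 2) + K * d ^ 4) := by
  have hK : 0 < 7 / log 2 := div_pos (by norm_num) (log_pos one_lt_two)
  refine ⟨⟨7 / log 2, hK, 1 / 2, by norm_num, fun d hd => ?_⟩,
    fun p₀ hp => ⟨7 / log 2, hK, 1 / 2, by norm_num, fun d hd => ?_⟩⟩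
  · have h := abs_nonsymInfo_sub_le hd (p₀ := 1 / 2) (by norm_num [abs_of_pos])
    rwa [show (1 / 2 - (1 / 2) ^ 2) * d ^ 2 / (2 * log 2) = d ^ 2 / (8 * log 2) by ring]
      at h
  · have h := abs_nonsymInfo_sub_le hd (abs_le.mpr ⟨by linarith [hp.1], hp.2⟩)
    linarith [(abs_le.mp h).2]
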